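/- arXiv:1803.06859 — 5 statements merged into one kernel-verified Lean document; each statement's English description precedes it below -/
import Mathlib

section
/- Let K be a field equipped with a non-archimedean absolute value |·|. Let d ≥ 1 be an integer and let F = (F_0, F_1) be a pair of binary forms of degree d over K. Then for every p = (p_0, p_1) ∈ K², |Res(F)| · (max(|p_0|, |p_1|))^d ≤ |F|^{2d−1} · max(|F_0(p_0,p_1)|, |F_1(p_0,p_1)|). -/
/-- The `2d × 2d` Sylvester matrix of a pair of binary forms of degree `d` with coefficient
families `a` and `b`: the `i`-th row (`0 ≤ i < d`) is `(0,…,0, a₀, …, a_d, 0, …, 0)` with `i`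
leading zeros, and the `(d+i)`-th row (`0 ≤ i < d`) is `(0,…,0, b₀, …, b_d, 0, …, 0)` with `i`
leading zeros. -/
def sylvesterPair {K : Type*} [Field K] (d : ℕ) (a b : Fin (d + 1) → K) :
    Matrix (Fin (2 * d)) (Fin (2 * d)) K :=
  Matrix.of fun i j =>
    if hi : (i : ℕ) < d then
      if h : (i : ℕ) ≤ (j : ℕ) ∧ (j : ℕ) ≤ (i : ℕ) + d then
        a ⟨(j : ℕ) - (i : ℕ), by omega⟩
      else 0
    else
      if h : (i : ℕ) - d ≤ (j : ℕ) ∧ (j : ℕ) ≤ ((i : ℕ) - d) + d then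
        b ⟨(j : ℕ) - ((i : ℕ) - d), by omega⟩
      else 0

private lemma exists_sum_le' {K : Type*} [Field K] (v : AbsoluteValue K ℝ)
    (hna : ∀ x y : K, v (x + y) ≤ max (v x) (v y)) {ι : Type*} (s : Finset ι) (hs : s.Nonempty)
    (g : ι → K) : ∃ i ∈ s, v (∑ j ∈ s, g j) ≤ v (g i) := by
  induction hs using Finset.Nonempty.cons_induction with
  | singleton a => exact ⟨a, Finset.mem_singleton_self a, by simp⟩
  | cons a s ha hs ih =>
    obtain ⟨i, his, hi⟩ := ih
    rw [Finset.sum_cons]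
    rcases le_total (v (g a)) (v (∑ j ∈ s, g j)) with h | h
    · exact ⟨i, Finset.mem_cons_of_mem his,
        ((hna _ _).trans (by rw [max_eq_right h])).trans hi⟩
    · exact ⟨a, Finset.mem_cons_self a s, (hna _ _).trans (by rw [max_eq_left h])⟩

private lemma det_bound' {K : Type*} [Field K] (v : AbsoluteValue K ℝ)
    (hna : ∀ x y : K, v (x + y) ≤ max (v x) (v y))
    {n : ℕ} (hn : 1 ≤ n) (M : Matrix (Fin n) (Fin n) K) (B X : ℝ) (hX : 0 ≤ X)
    (hM : ∀ i j, v (M i j) ≤ B) (c0 : Fin n) (g : Fin n → K) (hgc : g c0 = 1) (q : K)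
    (hrow : ∀ i : Fin n, v (q * ∑ j, g j * M i j) ≤ X) :
    v M.det * v q ≤ B ^ (n - 1) * X := by
  have hne : Nonempty (Fin n) := ⟨⟨0, hn⟩⟩
  set N := M.updateCol c0 (fun k => ∑ j, g j • M k j) with hN
  have hdet : N.det = M.det := by
    rw [hN, Matrix.det_updateCol_sum, hgc, one_smul]
  obtain ⟨σ, -, hσ⟩ := exists_sum_le' v hna Finset.univ Finset.univ_nonempty
      (fun σ : Equiv.Perm (Fin n) => Equiv.Perm.sign σ • ∏ i, N (σ i) i)
  have hvs : v (Equiv.Perm.sign σ • ∏ i, N (σ i) i) = v (∏ i, N (σ i) i) := by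
    rcases Int.units_eq_one_or (Equiv.Perm.sign σ) with h | h <;>
      simp [h, Units.smul_def]
  have h1 : v M.det ≤ v (∏ i, N (σ i) i) := by
    rw [← hdet, Matrix.det_apply]
    exact hσ.trans (le_of_eq hvs)
  have hprod : (∏ i, N (σ i) i) = N (σ c0) c0 * ∏ i ∈ Finset.univ.erase c0, N (σ i) i :=
    (Finset.mul_prod_erase _ _ (Finset.mem_univ c0)).symm
  have hcol : N (σ c0) c0 = ∑ j, g j * M (σ c0) j := by
    rw [hN]
    simp [Matrix.updateCol_self, smul_eq_mul]
  have hcard : (Finset.univ.erase c0).card = n - 1 := by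
    rw [Finset.card_erase_of_mem (Finset.mem_univ _), Finset.card_univ, Fintype.card_fin]
  have hrest : ∏ i ∈ Finset.univ.erase c0, v (N (σ i) i) ≤ B ^ (n - 1) := by
    calc ∏ i ∈ Finset.univ.erase c0, v (N (σ i) i) ≤ ∏ _i ∈ Finset.univ.erase c0, B := by
          refine Finset.prod_le_prod (fun i _ => v.nonneg _) (fun i hi => ?_)
          rw [hN, Matrix.updateCol_ne (Finset.ne_of_mem_erase hi)]
          exact hM _ _
      _ = B ^ (n - 1) := by rw [Finset.prod_const, hcard]
  calc v M.det * v q ≤ v (∏ i, N (σ i) i) * v q :=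
        mul_le_mul_of_nonneg_right h1 (v.nonneg q)
    _ = (v (N (σ c0) c0) * v q) * ∏ i ∈ Finset.univ.erase c0, v (N (σ i) i) := by
        rw [hprod, map_mul, map_prod]; ring
    _ ≤ X * B ^ (n - 1) := by
        refine mul_le_mul ?_ hrest (Finset.prod_nonneg fun i _ => v.nonneg _) hX
        calc v (N (σ c0) c0) * v q = v (q * N (σ c0) c0) := by rw [map_mul, mul_comm]
          _ ≤ X := by rw [hcol]; exact hrow _
    _ = B ^ (n - 1) * X := mul_comm _ _

private lemma sum_row' {K : Type*} [Field K] {d : ℕ} (cf : Fin (d + 1) → K) (G : ℕ → K)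
    (f : Fin (2 * d) → K) (m : ℕ) (hm : m < d)
    (hf : ∀ j : Fin (2 * d), f j =
      if h : m ≤ (j : ℕ) ∧ (j : ℕ) ≤ m + d then cf ⟨(j : ℕ) - m, by omega⟩ else 0) :
    ∑ j : Fin (2 * d), G (j : ℕ) * f j
      = ∑ k : Fin (d + 1), G (m + (k : ℕ)) * cf k := by
  set e : Fin (d + 1) → Fin (2 * d) := fun k => ⟨m + (k : ℕ), by omega⟩ with he
  have hinj : ∀ x ∈ Finset.univ, ∀ y ∈ Finset.univ, e x = e y → x = y := by
    intro x _ y _ hxy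
    have h := congrArg Fin.val hxy
    simp only [he] at h
    exact Fin.ext (by omega)
  have h0 : ∀ j ∈ Finset.univ, j ∉ Finset.univ.image e → G (j : ℕ) * f j = 0 := by
    intro j _ hj
    rw [hf j, dif_neg, mul_zero]
    intro hcond
    exact hj (Finset.mem_image.2 ⟨⟨(j : ℕ) - m, by omega⟩, Finset.mem_univ _,
      Fin.ext (show m + ((j : ℕ) - m) = (j : ℕ) by omega)⟩)
  rw [← Finset.sum_subset (Finset.subset_univ (Finset.univ.image e)) h0,
    Finset.sum_image hinj]
  refine Finset.sum_congr rfl fun k _ => ?_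
  have h1 : f (e k) = cf k := by
    rw [hf (e k), dif_pos ⟨Nat.le_add_right m k,
      show m + (k : ℕ) ≤ m + d from by have := k.isLt; omega⟩]
    congr 1
    exact Fin.ext (show m + (k : ℕ) - m = (k : ℕ) by omega)
  rw [h1]

private lemma inner_sum_A {K : Type*} [Field K] {d : ℕ} {p₀ p₁ : K} (hp₀ : p₀ ≠ 0)
    (cf : Fin (d + 1) → K) (m : ℕ) :
    p₀ ^ d * ∑ k : Fin (d + 1), (p₁ / p₀) ^ (m + (k : ℕ)) * cf k
      = (p₁ / p₀) ^ m * ∑ j : Fin (d + 1), cf j * p₀ ^ (d - (j : ℕ)) * p₁ ^ (j : ℕ) := by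
  rw [Finset.mul_sum, Finset.mul_sum]
  refine Finset.sum_congr rfl fun k _ => ?_
  have hk : (k : ℕ) ≤ d := by have := k.isLt; omega
  have hsplit : p₀ ^ d = p₀ ^ (d - (k : ℕ)) * p₀ ^ (k : ℕ) := by
    rw [← pow_add]; congr 1; omega
  have htk : (p₁ / p₀) ^ (k : ℕ) * p₀ ^ (k : ℕ) = p₁ ^ (k : ℕ) := by
    rw [div_pow, div_mul_cancel₀ _ (pow_ne_zero _ hp₀)]
  calc p₀ ^ d * ((p₁ / p₀) ^ (m + (k : ℕ)) * cf k)
      = (p₁ / p₀) ^ m * (cf k * p₀ ^ (d - (k : ℕ)) * ((p₁ / p₀) ^ (k : ℕ) * p₀ ^ (k : ℕ))) := by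
        rw [hsplit, pow_add]; ring
    _ = (p₁ / p₀) ^ m * (cf k * p₀ ^ (d - (k : ℕ)) * p₁ ^ (k : ℕ)) := by rw [htk]

private lemma inner_sum_B {K : Type*} [Field K] {d : ℕ} {p₀ p₁ : K} (hp₁ : p₁ ≠ 0)
    (cf : Fin (d + 1) → K) (m : ℕ) (hm : m < d) :
    p₁ ^ d * ∑ k : Fin (d + 1), (p₀ / p₁) ^ (2 * d - 1 - (m + (k : ℕ))) * cf k
      = (p₀ / p₁) ^ (d - 1 - m) * ∑ j : Fin (d + 1), cf j * p₀ ^ (d - (j : ℕ)) * p₁ ^ (j : ℕ) := by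
  rw [Finset.mul_sum, Finset.mul_sum]
  refine Finset.sum_congr rfl fun k _ => ?_
  have hk : (k : ℕ) ≤ d := by have := k.isLt; omega
  have hexp : 2 * d - 1 - (m + (k : ℕ)) = (d - 1 - m) + (d - (k : ℕ)) := by omega
  have hsplit : p₁ ^ d = p₁ ^ (d - (k : ℕ)) * p₁ ^ (k : ℕ) := by
    rw [← pow_add]; congr 1; omega
  have htk : (p₀ / p₁) ^ (d - (k : ℕ)) * p₁ ^ (d - (k : ℕ)) = p₀ ^ (d - (k : ℕ)) := by
    rw [div_pow, div_mul_cancel₀ _ (pow_ne_zero _ hp₁)]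
  calc p₁ ^ d * ((p₀ / p₁) ^ (2 * d - 1 - (m + (k : ℕ))) * cf k)
      = (p₀ / p₁) ^ (d - 1 - m)
          * (cf k * ((p₀ / p₁) ^ (d - (k : ℕ)) * p₁ ^ (d - (k : ℕ))) * p₁ ^ (k : ℕ)) := by
        rw [hexp, pow_add, hsplit]; ring
    _ = (p₀ / p₁) ^ (d - 1 - m) * (cf k * p₀ ^ (d - (k : ℕ)) * p₁ ^ (k : ℕ)) := by rw [htk]

/-- For a field `K` with a non-archimedean absolute value, `d ≥ 1`, and a pair
`F = (F₀, F₁)` of binary forms of degree `d` over `K`, for every `p = (p₀, p₁) ∈ K²`,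
`|Res(F)| * (max |p₀| |p₁|)^d ≤ |F|^(2d−1) * max |F₀(p)| |F₁(p)|`. -/
theorem stmt2 (K : Type*) [Field K] (v : AbsoluteValue K ℝ)
    (hna : ∀ x y : K, v (x + y) ≤ max (v x) (v y))
    (d : ℕ) (hd : 1 ≤ d) (a b : Fin (d + 1) → K) (p₀ p₁ : K) :
    v ((sylvesterPair d a b).det) * (max (v p₀) (v p₁)) ^ d
      ≤ (Finset.univ.sup' Finset.univ_nonempty
            (fun j : Fin (d + 1) => max (v (a j)) (v (b j)))) ^ (2 * d - 1)
          * max (v (∑ j : Fin (d + 1), a j * p₀ ^ (d - (j : ℕ)) * p₁ ^ (j : ℕ)))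
              (v (∑ j : Fin (d + 1), b j * p₀ ^ (d - (j : ℕ)) * p₁ ^ (j : ℕ))) := by
  classical
  set M := sylvesterPair d a b with hM
  set B := Finset.univ.sup' Finset.univ_nonempty
      (fun j : Fin (d + 1) => max (v (a j)) (v (b j))) with hB
  have hB0 : 0 ≤ B :=
    le_trans (le_trans (v.nonneg (a 0)) (le_max_left _ _))
      (Finset.le_sup' (fun j : Fin (d + 1) => max (v (a j)) (v (b j))) (Finset.mem_univ 0))
  set A0 := ∑ j : Fin (d + 1), a j * p₀ ^ (d - (j : ℕ)) * p₁ ^ (j : ℕ) with hA0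
  set A1 := ∑ j : Fin (d + 1), b j * p₀ ^ (d - (j : ℕ)) * p₁ ^ (j : ℕ) with hA1
  set X := max (v A0) (v A1) with hX
  have hX0 : 0 ≤ X := le_trans (v.nonneg A0) (le_max_left _ _)
  have hMb : ∀ i j, v (M i j) ≤ B := by
    intro i j
    rw [hM]
    unfold sylvesterPair
    rw [Matrix.of_apply]
    split_ifs with h1 h2 h3
    · exact le_trans (le_max_left _ _)
        (Finset.le_sup' (fun j : Fin (d + 1) => max (v (a j)) (v (b j))) (Finset.mem_univ _))
    · simpa using hB0
    · exact le_trans (le_max_right _ _)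
        (Finset.le_sup' (fun j : Fin (d + 1) => max (v (a j)) (v (b j))) (Finset.mem_univ _))
    · simpa using hB0
  have hfa : ∀ i : Fin (2 * d), (i : ℕ) < d → ∀ j : Fin (2 * d), M i j =
      if h : (i : ℕ) ≤ (j : ℕ) ∧ (j : ℕ) ≤ (i : ℕ) + d then
        a ⟨(j : ℕ) - (i : ℕ), by omega⟩ else 0 := by
    intro i hi j
    rw [hM]; unfold sylvesterPair; rw [Matrix.of_apply, dif_pos hi]
  have hfb : ∀ i : Fin (2 * d), ¬ ((i : ℕ) < d) → ∀ j : Fin (2 * d), M i j =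
      if h : (i : ℕ) - d ≤ (j : ℕ) ∧ (j : ℕ) ≤ ((i : ℕ) - d) + d then
        b ⟨(j : ℕ) - ((i : ℕ) - d), by omega⟩ else 0 := by
    intro i hi j
    rw [hM]; unfold sylvesterPair; rw [Matrix.of_apply, dif_neg hi]
  rcases le_or_gt (v p₁) (v p₀) with hle | hlt
  · by_cases hp₀ : p₀ = 0
    · have hv0 : v p₀ = 0 := by simp [hp₀]
      have hv1 : v p₁ = 0 := le_antisymm (hv0 ▸ hle) (v.nonneg _)
      have hmax : max (v p₀) (v p₁) = 0 := by rw [hv0, hv1, max_self]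
      rw [hmax, zero_pow (by omega : d ≠ 0), mul_zero]
      exact mul_nonneg (pow_nonneg hB0 _) hX0
    · have hmax : max (v p₀) (v p₁) = v p₀ := max_eq_left hle
      have ht : v (p₁ / p₀) ≤ 1 := by
        rw [map_div₀]
        exact div_le_one_of_le₀ hle (v.nonneg _)
      have key : ∀ i : Fin (2 * d), p₀ ^ d * ∑ j : Fin (2 * d), (p₁ / p₀) ^ (j : ℕ) * M i j
          = (p₁ / p₀) ^ (if (i : ℕ) < d then (i : ℕ) else (i : ℕ) - d)
            * (if (i : ℕ) < d then A0 else A1) := by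
        intro i
        by_cases hi : (i : ℕ) < d
        · rw [if_pos hi, if_pos hi]
          calc p₀ ^ d * ∑ j : Fin (2 * d), (p₁ / p₀) ^ (j : ℕ) * M i j
              = p₀ ^ d * ∑ k : Fin (d + 1), (p₁ / p₀) ^ ((i : ℕ) + (k : ℕ)) * a k :=
                congrArg (fun z => p₀ ^ d * z)
                  (sum_row' a (fun n => (p₁ / p₀) ^ n) (fun j => M i j) (i : ℕ) hi (hfa i hi))
            _ = (p₁ / p₀) ^ (i : ℕ) * A0 := inner_sum_A hp₀ a (i : ℕ)
        · rw [if_neg hi, if_neg hi]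
          have hi2 : (i : ℕ) - d < d := by have := i.isLt; omega
          calc p₀ ^ d * ∑ j : Fin (2 * d), (p₁ / p₀) ^ (j : ℕ) * M i j
              = p₀ ^ d * ∑ k : Fin (d + 1), (p₁ / p₀) ^ (((i : ℕ) - d) + (k : ℕ)) * b k :=
                congrArg (fun z => p₀ ^ d * z)
                  (sum_row' b (fun n => (p₁ / p₀) ^ n) (fun j => M i j) ((i : ℕ) - d) hi2
                    (hfb i hi))
            _ = (p₁ / p₀) ^ ((i : ℕ) - d) * A1 := inner_sum_A hp₀ b ((i : ℕ) - d)
      have hrow : ∀ i : Fin (2 * d),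
          v (p₀ ^ d * ∑ j : Fin (2 * d), (p₁ / p₀) ^ (j : ℕ) * M i j) ≤ X := by
        intro i
        rw [key i, map_mul, map_pow]
        refine le_trans (mul_le_mul (pow_le_one₀ (v.nonneg _) ht) ?_ (v.nonneg _) zero_le_one)
          (le_of_eq (one_mul _))
        split_ifs
        · exact le_max_left _ _
        · exact le_max_right _ _
      have hfin := det_bound' v hna (by omega : 1 ≤ 2 * d) M B X hX0 hMb
        ⟨0, by omega⟩ (fun j : Fin (2 * d) => (p₁ / p₀) ^ (j : ℕ)) (pow_zero _) (p₀ ^ d) hrow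
      rw [map_pow] at hfin
      rw [hmax]
      exact hfin
  · have hp₁ : p₁ ≠ 0 := by
      intro h
      rw [h, map_zero] at hlt
      exact absurd hlt (not_lt.2 (v.nonneg _))
    have hmax : max (v p₀) (v p₁) = v p₁ := max_eq_right hlt.le
    have ht : v (p₀ / p₁) ≤ 1 := by
      rw [map_div₀]
      exact div_le_one_of_le₀ hlt.le (v.nonneg _)
    have key : ∀ i : Fin (2 * d),
        p₁ ^ d * ∑ j : Fin (2 * d), (p₀ / p₁) ^ (2 * d - 1 - (j : ℕ)) * M i j
          = (p₀ / p₁) ^ (if (i : ℕ) < d then d - 1 - (i : ℕ) else d - 1 - ((i : ℕ) - d))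
            * (if (i : ℕ) < d then A0 else A1) := by
      intro i
      by_cases hi : (i : ℕ) < d
      · rw [if_pos hi, if_pos hi]
        calc p₁ ^ d * ∑ j : Fin (2 * d), (p₀ / p₁) ^ (2 * d - 1 - (j : ℕ)) * M i j
            = p₁ ^ d * ∑ k : Fin (d + 1), (p₀ / p₁) ^ (2 * d - 1 - ((i : ℕ) + (k : ℕ))) * a k :=
              congrArg (fun z => p₁ ^ d * z)
                (sum_row' a (fun n => (p₀ / p₁) ^ (2 * d - 1 - n)) (fun j => M i j) (i : ℕ) hi
                  (hfa i hi))
          _ = (p₀ / p₁) ^ (d - 1 - (i : ℕ)) * A0 := inner_sum_B hp₁ a (i : ℕ) hi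
      · rw [if_neg hi, if_neg hi]
        have hi2 : (i : ℕ) - d < d := by have := i.isLt; omega
        calc p₁ ^ d * ∑ j : Fin (2 * d), (p₀ / p₁) ^ (2 * d - 1 - (j : ℕ)) * M i j
            = p₁ ^ d * ∑ k : Fin (d + 1),
                (p₀ / p₁) ^ (2 * d - 1 - (((i : ℕ) - d) + (k : ℕ))) * b k :=
              congrArg (fun z => p₁ ^ d * z)
                (sum_row' b (fun n => (p₀ / p₁) ^ (2 * d - 1 - n)) (fun j => M i j)
                  ((i : ℕ) - d) hi2 (hfb i hi))
          _ = (p₀ / p₁) ^ (d - 1 - ((i : ℕ) - d)) * A1 := inner_sum_B hp₁ b ((i : ℕ) - d) hi2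
    have hrow : ∀ i : Fin (2 * d),
        v (p₁ ^ d * ∑ j : Fin (2 * d), (p₀ / p₁) ^ (2 * d - 1 - (j : ℕ)) * M i j) ≤ X := by
      intro i
      rw [key i, map_mul, map_pow]
      refine le_trans (mul_le_mul (pow_le_one₀ (v.nonneg _) ht) ?_ (v.nonneg _) zero_le_one)
        (le_of_eq (one_mul _))
      split_ifs
      · exact le_max_left _ _
      · exact le_max_right _ _
    have hfin := det_bound' v hna (by omega : 1 ≤ 2 * d) M B X hX0 hMb
      ⟨2 * d - 1, by omega⟩ (fun j : Fin (2 * d) => (p₀ / p₁) ^ (2 * d - 1 - (j : ℕ)))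
      (by simp) (p₁ ^ d) hrow
    rw [map_pow] at hfin
    rw [hmax]
    exact hfin
end

section
/- Let d > 1 and n ≥ 1 be integers and set d_n := ∑_{m | n} μ(n/m)(d^m + 1), the sum ranging over positive divisors m of n, where μ is the Möbius function. Then d_n ≥ (1 − 1/d) d^n, i.e. d · d_n ≥ (d − 1) d^n as integers. -/
/-!
Write `d_n = ∑_{m ∣ n} μ(n/m) d^m + ∑_{m ∣ n} μ(n/m)`. The second sum is `[n = 1] ≥ 0`. In the
first, the term `m = n` is `d^n` and every other term is at least `-d^m`, where `m` is a proper
divisor, so `2m ≤ n`. Hence `d_n ≥ d^n - (d + d^2 + ⋯ + d^{⌊n/2⌋})`, and the geometric sum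
satisfies `d (d + ⋯ + d^k) ≤ d^{2k}` once `d ≥ 2`.
-/

open ArithmeticFunction Finset
open scoped ArithmeticFunction.Moebius

lemma Nat.two_mul_le_of_mem_properDivisors {m n : ℕ} (h : m ∈ n.properDivisors) : 2 * m ≤ n := by
  obtain ⟨⟨c, rfl⟩, -⟩ := Nat.mem_properDivisors.mp h
  have hc : 1 < c := by
    simpa [Nat.mul_div_cancel_left _ (Nat.pos_of_mem_properDivisors h)] using
      Nat.one_lt_div_of_mem_properDivisors h
  nlinarith

lemma Nat.properDivisors_subset_Icc_half (n : ℕ) : n.properDivisors ⊆ Icc 1 (n / 2) := fun m hm =>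
  mem_Icc.mpr ⟨Nat.pos_of_mem_properDivisors hm, by
    have := Nat.two_mul_le_of_mem_properDivisors hm; omega⟩

section GeomSum

variable {R : Type*} [CommSemiring R] [PartialOrder R] [IsOrderedRing R] {d : R}

lemma mul_sum_Icc_one_pow_le_pow_two_mul (hd : 2 ≤ d) (k : ℕ) :
    d * ∑ m ∈ Icc 1 k, d ^ m ≤ d ^ (2 * k) := by
  have hd1 : 1 ≤ d := one_le_two.trans hd
  rcases Nat.eq_zero_or_pos k with rfl | hk
  · simp
  induction k, hk using Nat.le_induction with
  | base => simp [sq]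
  | succ k hk ih =>
    rw [sum_Icc_succ_top (by omega), mul_add]
    calc d * ∑ m ∈ Icc 1 k, d ^ m + d * d ^ (k + 1)
        ≤ d ^ (2 * k + 1) + d ^ (2 * k + 1) := by
          gcongr
          · exact ih.trans (pow_le_pow_right₀ hd1 (by omega))
          · rw [← pow_succ']; exact pow_le_pow_right₀ hd1 (by omega)
      _ = 2 * d ^ (2 * k + 1) := (two_mul _).symm
      _ ≤ d ^ (2 * (k + 1)) := by
          rw [show 2 * (k + 1) = 2 * k + 1 + 1 by ring, pow_succ' d (2 * k + 1)]
          gcongr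
          exact pow_nonneg (zero_le_one.trans hd1) _

lemma mul_sum_properDivisors_pow_le (hd : 2 ≤ d) (n : ℕ) :
    d * ∑ m ∈ n.properDivisors, d ^ m ≤ d ^ n := by
  have hd0 : 0 ≤ d := zero_le_two.trans hd
  calc d * ∑ m ∈ n.properDivisors, d ^ m
      ≤ d * ∑ m ∈ Icc 1 (n / 2), d ^ m := by
        gcongr ?_ * ?_
        exact sum_le_sum_of_subset_of_nonneg (Nat.properDivisors_subset_Icc_half n)
          fun _ _ _ => pow_nonneg hd0 _
    _ ≤ d ^ (2 * (n / 2)) := mul_sum_Icc_one_pow_le_pow_two_mul hd _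
    _ ≤ d ^ n := pow_le_pow_right₀ (one_le_two.trans hd) (by omega)

end GeomSum

lemma sum_moebius_div_divisors_nonneg (n : ℕ) : 0 ≤ ∑ m ∈ n.divisors, (μ (n / m) : ℤ) := by
  rw [Nat.sum_div_divisors n fun i => (μ i : ℤ), ← coe_mul_zeta_apply, moebius_mul_coe_zeta,
    one_apply]
  split_ifs <;> norm_num

lemma pow_sub_sum_properDivisors_le_sum_moebius_mul_pow {a : ℤ} (ha : 0 ≤ a) {n : ℕ}
    (hn : n ≠ 0) :
    a ^ n - ∑ m ∈ n.properDivisors, a ^ m ≤ ∑ m ∈ n.divisors, (μ (n / m) : ℤ) * a ^ m := by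
  rw [← Nat.cons_self_properDivisors hn, sum_cons, Nat.div_self (Nat.pos_of_ne_zero hn),
    moebius_apply_one, one_mul, sub_eq_add_neg, ← sum_neg_distrib]
  gcongr with m
  have := (abs_le.mp (abs_moebius_le_one (n := n / m))).1
  nlinarith [pow_nonneg ha m]

/-- For integers `d > 1` and `n ≥ 1`, with
`d_n := ∑_{m | n} μ(n/m)(d^m + 1)`, one has `d · d_n ≥ (d − 1) d^n` as integers. -/
theorem stmt7 (d n : ℕ) (hd : 1 < d) (hn : 1 ≤ n) :
    ((d : ℤ) - 1) * (d : ℤ) ^ n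
      ≤ (d : ℤ) * ∑ m ∈ n.divisors, (μ (n / m) : ℤ) * ((d : ℤ) ^ m + 1) := by
  have hd2 : (2 : ℤ) ≤ d := by exact_mod_cast hd
  have hsplit : ∑ m ∈ n.divisors, (μ (n / m) : ℤ) * ((d : ℤ) ^ m + 1)
      = ∑ m ∈ n.divisors, (μ (n / m) : ℤ) * (d : ℤ) ^ m + ∑ m ∈ n.divisors, (μ (n / m) : ℤ) := by
    simp only [mul_add_one, sum_add_distrib]
  have hmoebius := pow_sub_sum_properDivisors_le_sum_moebius_mul_pow
    (by positivity : (0 : ℤ) ≤ d) (n := n) (by omega)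
  have hgeom := mul_sum_properDivisors_pow_le hd2 n
  have hconst := sum_moebius_div_divisors_nonneg n
  rw [hsplit]
  nlinarith
end

section
/- Let K be an algebraically closed field equipped with a nontrivial non-archimedean absolute value |·|. Let h ∈ K[z] be a polynomial with h(0) = 0, let r > 0 be a real number and C ≥ 0 be a real number such that |h(w)| ≤ C for every w ∈ K with |w| < r. Then for every z ∈ K with |z| < r, one has |h(z)| ≤ (C/r)·|z|. -/
/-!
Write `h = X * g`. Factoring `g` over its roots, the ultrametric inequality gives
`|z - a| ≤ max |z| |a| ≤ |w - a|` for every root `a` as soon as `|z| ≤ |w|` and `|w| ≠ |a|`, so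
`|g z| ≤ |g w| ≤ C / |w|`. Since `K` is algebraically closed its value group is divisible, hence
dense in `(0, ∞)`, and `|w|` can be taken arbitrarily close to `r` while avoiding the finitely many
`|a|`.
-/

open Polynomial Set Filter Topology

theorem IsNonarchimedean.abv_sub_le_max {R : Type*} [Ring R] {v : AbsoluteValue R ℝ}
    (hna : IsNonarchimedean v) (x y : R) : v (x - y) ≤ max (v x) (v y) := by
  simpa only [sub_eq_add_neg, map_neg_eq_map] using hna x (-y)

theorem IsNonarchimedean.abv_sub_eq_max_of_ne {R : Type*} [Ring R] {v : AbsoluteValue R ℝ}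
    (hna : IsNonarchimedean v) {x y : R} (hne : v x ≠ v y) : v (x - y) = max (v x) (v y) := by
  rw [sub_eq_add_neg, hna.add_eq_max_of_ne (by rwa [map_neg_eq_map]), map_neg_eq_map]

theorem IsNonarchimedean.abv_eval_le_of_splits {R : Type*} [CommRing R] [IsDomain R]
    {v : AbsoluteValue R ℝ} (hna : IsNonarchimedean v) {g : R[X]} (hg : g.Splits) {z w : R}
    (hzw : v z ≤ v w) (hw : ∀ a ∈ g.roots, v w ≠ v a) : v (g.eval z) ≤ v (g.eval w) := by
  simp only [hg.eval_eq_prod_roots, map_mul, map_multiset_prod, Multiset.map_map,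
    Function.comp_def]
  refine mul_le_mul_of_nonneg_left (Multiset.prod_map_le_prod_map₀ _ _
    (fun _ _ ↦ v.nonneg _) fun a ha ↦ ?_) (v.nonneg _)
  calc v (z - a) ≤ max (v z) (v a) := hna.abv_sub_le_max z a
    _ ≤ max (v w) (v a) := max_le_max_right _ hzw
    _ = v (w - a) := (hna.abv_sub_eq_max_of_ne (hw a ha)).symm

section IsAlgClosed

variable {K : Type*} [Field K] [IsAlgClosed K] {v : AbsoluteValue K ℝ}

theorem AbsoluteValue.IsNontrivial.exists_abv_mem_Ioo (hv : v.IsNontrivial) {a b : ℝ}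
    (ha : 0 < a) (hab : a < b) : ∃ x : K, v x ∈ Ioo a b := by
  obtain ⟨c, hc⟩ := hv.exists_abv_gt_one
  obtain ⟨n, hn⟩ := pow_unbounded_of_one_lt (v c) ((one_lt_div ha).mpr hab)
  have hn0 : n ≠ 0 := by rintro rfl; exact hc.not_gt (by simpa using hn)
  obtain ⟨y, rfl⟩ := IsAlgClosed.exists_pow_nat_eq c (Nat.pos_of_ne_zero hn0)
  rw [map_pow] at hc hn
  have hy1 : 1 < v y := (one_lt_pow_iff_of_nonneg (v.nonneg y) hn0).mp hc
  have hyba : v y < b / a :=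
    (pow_lt_pow_iff_left₀ (v.nonneg y) (div_pos (ha.trans hab) ha).le hn0).mp hn
  obtain ⟨k, hk, hk1⟩ := exists_mem_Ico_zpow ha hy1
  refine ⟨y ^ (k + 1), ?_, ?_⟩ <;> rw [map_zpow₀]
  · exact hk1
  · calc v y ^ (k + 1) = v y ^ k * v y := zpow_add_one₀ (by positivity) k
      _ < a * (b / a) := mul_lt_mul' hk hyba (v.nonneg y) ha
      _ = b := mul_div_cancel₀ b ha.ne'

theorem AbsoluteValue.IsNontrivial.exists_abv_mem_Ioo_forall_ne (hv : v.IsNontrivial)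
    (s : Multiset K) {a b : ℝ} (ha : 0 < a) (hab : a < b) :
    ∃ x : K, v x ∈ Ioo a b ∧ ∀ y ∈ s, v x ≠ v y := by
  induction s using Multiset.induction_on generalizing a with
  | empty => simpa using hv.exists_abv_mem_Ioo ha hab
  | cons y s ih =>
    simp only [Multiset.forall_mem_cons]
    by_cases hyb : v y < b
    · obtain ⟨x, hx, hxs⟩ := ih (lt_max_of_lt_left ha) (max_lt hab hyb)
      exact ⟨x, ⟨(le_max_left _ _).trans_lt hx.1, hx.2⟩,
        ((le_max_right _ _).trans_lt hx.1).ne', hxs⟩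
    · obtain ⟨x, hx, hxs⟩ := ih ha hab
      exact ⟨x, hx, (hx.2.trans_le (not_lt.mp hyb)).ne, hxs⟩

theorem IsNonarchimedean.abv_eval_mul_le (hna : IsNonarchimedean v) (hv : v.IsNontrivial)
    {g : K[X]} {r C : ℝ} (hb : ∀ w : K, v w < r → v (g.eval w) * v w ≤ C) {z : K}
    (hz : v z < r) : v (g.eval z) * r ≤ C := by
  have hlim : Tendsto (fun t ↦ v (g.eval z) * t) (𝓝[<] r) (𝓝 (v (g.eval z) * r)) :=
    ((continuous_const.mul continuous_id).tendsto r).mono_left nhdsWithin_le_nhds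
  refine le_of_tendsto hlim ?_
  filter_upwards [Ioo_mem_nhdsLT hz] with t ⟨hzt, htr⟩
  have ht : 0 < t := (v.nonneg z).trans_lt hzt
  obtain ⟨w, ⟨htw, hwr⟩, hw⟩ := hv.exists_abv_mem_Ioo_forall_ne g.roots ht htr
  calc v (g.eval z) * t ≤ v (g.eval w) * v w :=
        mul_le_mul (hna.abv_eval_le_of_splits (IsAlgClosed.splits g) (hzt.trans htw).le hw)
          htw.le ht.le (v.nonneg _)
    _ ≤ C := hb w hwr

end IsAlgClosed

theorem stmt10_general (K : Type*) [Field K] [IsAlgClosed K] (v : AbsoluteValue K ℝ)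
    (hna : ∀ x y : K, v (x + y) ≤ max (v x) (v y))
    (hnt : ∃ x : K, v x ≠ 0 ∧ v x ≠ 1)
    (h : Polynomial K) (h0 : h.eval 0 = 0)
    (r C : ℝ)
    (hb : ∀ w : K, v w < r → v (h.eval w) ≤ C) :
    ∀ z : K, v z < r → v (h.eval z) ≤ (C / r) * v z := by
  intro z hz
  have hv : v.IsNontrivial := by
    obtain ⟨x, hx0, hx1⟩ := hnt
    exact ⟨x, fun hx ↦ hx0 (by rw [hx, map_zero]), hx1⟩
  obtain ⟨g, rfl⟩ : X ∣ h := X_dvd_iff.mpr (by rwa [coeff_zero_eq_eval_zero])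
  have hr : 0 < r := (v.nonneg z).trans_lt hz
  have hg : v (g.eval z) * r ≤ C :=
    IsNonarchimedean.abv_eval_mul_le hna hv (fun w hw ↦ by simpa [mul_comm] using hb w hw) hz
  rw [eval_mul, eval_X, map_mul, div_mul_eq_mul_div, le_div_iff₀ hr]
  calc v z * v (g.eval z) * r = v (g.eval z) * r * v z := by ring
    _ ≤ C * v z := mul_le_mul_of_nonneg_right hg (v.nonneg z)

/-- non-archimedean Schwarz lemma: Let `K` be an algebraically closed field
with a nontrivial non-archimedean absolute value. Let `h ∈ K[z]` with `h(0) = 0`, `r > 0`,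
`C ≥ 0` with `|h(w)| ≤ C` for every `w` with `|w| < r`. Then for every `z` with `|z| < r`,
`|h(z)| ≤ (C/r)·|z|`. -/
theorem stmt10 (K : Type*) [Field K] [IsAlgClosed K] (v : AbsoluteValue K ℝ)
    (hna : ∀ x y : K, v (x + y) ≤ max (v x) (v y))
    (hnt : ∃ x : K, v x ≠ 0 ∧ v x ≠ 1)
    (h : Polynomial K) (h0 : h.eval 0 = 0)
    (r C : ℝ) (hr : 0 < r) (hC : 0 ≤ C)
    (hb : ∀ w : K, v w < r → v (h.eval w) ≤ C) :
    ∀ z : K, v z < r → v (h.eval z) ≤ (C / r) * v z :=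
  stmt10_general K v hna hnt h h0 r C hb
end

section
/- Let K be an algebraically closed field equipped with a nontrivial non-archimedean absolute value |·|. Let g ∈ K[z] be a polynomial with g(0) = 0 and g'(0) = 0 (where g' denotes the formal derivative). Let M ≥ 1 be a real number such that |g(z)| ≤ M·|z| for every z ∈ K with |z| < 1/M. Then for every z ∈ K with |z| < 1/M, one has |g(z)| ≤ M²·|z|². -/
/-!
Write `g = z² h`. For a nonarchimedean absolute value, `|h(w)| = |c| ∏ max(|w|, |β|)` over the
roots `β` of `h` as soon as `|w|` differs from every `|β|`, and this product is monotone in `|w|`.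
So `|h(z)| ≤ |h(w)| ≤ M / |w|` for every such `w` with `|z| ≤ |w| < 1/M`, and since the values of
`|·|` are dense in `(0, ∞)` over an algebraically closed field, `|w|` can be taken arbitrarily
close to `1/M`, giving `|h(z)| ≤ M²`.
-/

open Polynomial

namespace AbsoluteValue

variable {K : Type*} [Field K] {v : AbsoluteValue K ℝ}

theorem exists_abv_mem_Ioo [IsAlgClosed K] (hv : v.IsNontrivial) {a b : ℝ} (ha : 0 < a)
    (hab : a < b) : ∃ w : K, v w ∈ Set.Ioo a b := by
  obtain ⟨u, hu0, hu1⟩ := hv.exists_abv_lt_one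
  obtain ⟨n, hn⟩ := exists_pow_lt_of_lt_one (v.pos hu0) ((div_lt_one (ha.trans hab)).mpr hab)
  have hn0 : n ≠ 0 := by rintro rfl; simp at hn; linarith
  obtain ⟨y, hy⟩ := IsAlgClosed.exists_pow_nat_eq u (Nat.pos_of_ne_zero hn0)
  have hvy : v y ^ n = v u := by rw [← map_pow, hy]
  -- `v y = |u|^(1/n)` lies in `(a/b, 1)`, so some integer power of it lies in `(a, b)`
  have hs_lt_one : v y < 1 := (pow_lt_one_iff_of_nonneg (v.nonneg y) hn0).mp (hvy ▸ hu1)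
  have hs_gt : a / b < v y := lt_of_pow_lt_pow_left₀ n (v.nonneg y) (hvy ▸ hn)
  have hs_pos : 0 < v y := (div_pos ha (ha.trans hab)).trans hs_gt
  obtain ⟨k, hk⟩ := exists_zpow_btwn_of_lt_mul
    ((div_lt_iff₀' (ha.trans hab)).mp hs_gt) (ha.trans hab) hs_pos hs_lt_one
  exact ⟨y ^ k, by rwa [map_zpow₀]⟩

theorem exists_abv_mem_Ioo_notMem [IsAlgClosed K] (hv : v.IsNontrivial) (S : Finset ℝ)
    {a b : ℝ} (ha : 0 < a) (hab : a < b) : ∃ w : K, v w ∈ Set.Ioo a b ∧ v w ∉ S := by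
  set T := insert a (S.filter (· < b))
  have hT : T.Nonempty := Finset.insert_nonempty _ _
  have ha' : a ≤ T.max' hT := T.le_max' a (Finset.mem_insert_self _ _)
  have hb' : T.max' hT < b := by
    refine (T.max'_lt_iff hT).mpr fun s hs ↦ ?_
    rcases Finset.mem_insert.mp hs with rfl | hs
    · exact hab
    · exact (Finset.mem_filter.mp hs).2
  obtain ⟨w, hw₁, hw₂⟩ := exists_abv_mem_Ioo hv (ha.trans_le ha') hb'
  refine ⟨w, ⟨ha'.trans_lt hw₁, hw₂⟩, fun hS ↦ hw₁.not_ge ?_⟩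
  exact T.le_max' _ (Finset.mem_insert_of_mem (Finset.mem_filter.mpr ⟨hS, hw₂⟩))

section Nonarchimedean

variable (hna : IsNonarchimedean v) {f : K[X]} (hf : f.Splits)
include hna hf

theorem abv_eval_le_prod_max {z : K} {r : ℝ} (hz : v z ≤ r) :
    v (f.eval z) ≤ v f.leadingCoeff * (f.roots.map fun β ↦ max r (v β)).prod := by
  rw [hf.eval_eq_prod_roots, map_mul, map_multiset_prod, Multiset.map_map]
  refine mul_le_mul_of_nonneg_left (Multiset.prod_map_le_prod_map₀ _ _
    (fun _ _ ↦ v.nonneg _) fun β _ ↦ ?_) (v.nonneg _)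
  calc v (z - β) ≤ max (v z) (v (-β)) := by rw [sub_eq_add_neg]; exact hna z (-β)
    _ ≤ max r (v β) := by rw [map_neg_eq_map]; exact max_le_max_right _ hz

theorem abv_eval_eq_prod_max {w : K} (hw : ∀ β ∈ f.roots, v β ≠ v w) :
    v (f.eval w) = v f.leadingCoeff * (f.roots.map fun β ↦ max (v w) (v β)).prod := by
  rw [hf.eval_eq_prod_roots, map_mul, map_multiset_prod, Multiset.map_map]
  congr 1
  refine congrArg _ (Multiset.map_congr rfl fun β hβ ↦ ?_)
  simp only [Function.comp_apply, sub_eq_add_neg]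
  rw [hna.add_eq_max_of_ne (by rw [map_neg_eq_map]; exact (hw β hβ).symm), map_neg_eq_map]

theorem abv_eval_le_abv_eval {z w : K} (hzw : v z ≤ v w) (hw : ∀ β ∈ f.roots, v β ≠ v w) :
    v (f.eval z) ≤ v (f.eval w) :=
  (abv_eval_le_prod_max hna hf hzw).trans_eq (abv_eval_eq_prod_max hna hf hw).symm

end Nonarchimedean

theorem abv_eval_le_sq_of_forall_abv_mul_abv_eval_le [IsAlgClosed K] (hna : IsNonarchimedean v)
    (hv : v.IsNontrivial) (f : K[X]) {M : ℝ} (hb : ∀ w : K, v w < 1 / M → v w * v (f.eval w) ≤ M)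
    {z : K} (hz : v z < 1 / M) : v (f.eval z) ≤ M ^ 2 := by
  have hM : 0 < M := one_div_pos.mp ((v.nonneg z).trans_lt hz)
  by_contra! hfz
  have hfz0 : 0 < v (f.eval z) := (by positivity : (0 : ℝ) < M ^ 2).trans hfz
  have hr : M / v (f.eval z) < 1 / M := by
    rw [div_lt_div_iff₀ hfz0 hM]
    nlinarith
  obtain ⟨w, ⟨hw₁, hw₂⟩, hwS⟩ := exists_abv_mem_Ioo_notMem hv (f.roots.map v).toFinset
    (lt_max_of_lt_right (div_pos hM hfz0)) (max_lt hz hr)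
  have hw0 : 0 < v w := (lt_max_of_lt_right (div_pos hM hfz0)).trans hw₁
  have hroots : ∀ β ∈ f.roots, v β ≠ v w := fun β hβ h ↦
    hwS (Multiset.mem_toFinset.mpr (h ▸ Multiset.mem_map_of_mem v hβ))
  have hzw : v (f.eval z) ≤ v (f.eval w) :=
    abv_eval_le_abv_eval hna (IsAlgClosed.splits f) ((le_max_left _ _).trans hw₁.le) hroots
  have hMw : M / v (f.eval z) < v w := (le_max_right _ _).trans_lt hw₁
  rw [div_lt_iff₀ hfz0] at hMw
  nlinarith [hb w hw₂]

end AbsoluteValue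

theorem Polynomial.X_sq_dvd_of_eval_zero {R : Type*} [CommSemiring R] {g : R[X]}
    (hg0 : g.eval 0 = 0) (hg'0 : (derivative g).eval 0 = 0) : X ^ 2 ∣ g := by
  rw [X_pow_dvd_iff]
  intro d hd
  interval_cases d
  · rwa [coeff_zero_eq_eval_zero]
  · simpa [← coeff_zero_eq_eval_zero, coeff_derivative] using hg'0

theorem stmt11_general (K : Type*) [Field K] [IsAlgClosed K] (v : AbsoluteValue K ℝ)
    (hna : ∀ x y : K, v (x + y) ≤ max (v x) (v y))
    (hnt : ∃ x : K, v x ≠ 0 ∧ v x ≠ 1)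
    (g : Polynomial K) (hg0 : g.eval 0 = 0)
    (hg'0 : (Polynomial.derivative g).eval 0 = 0)
    (M : ℝ)
    (hb : ∀ z : K, v z < 1 / M → v (g.eval z) ≤ M * v z) :
    ∀ z : K, v z < 1 / M → v (g.eval z) ≤ M ^ 2 * (v z) ^ 2 := by
  have hv : v.IsNontrivial := by
    obtain ⟨x, hx0, hx1⟩ := hnt
    exact ⟨x, fun h ↦ hx0 (by rw [h, map_zero]), hx1⟩
  obtain ⟨h, rfl⟩ := X_sq_dvd_of_eval_zero hg0 hg'0
  have habv : ∀ z : K, v ((X ^ 2 * h).eval z) = v z ^ 2 * v (h.eval z) := fun z ↦ by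
    rw [eval_mul, eval_pow, eval_X, map_mul, map_pow]
  have hbh : ∀ w : K, v w < 1 / M → v w * v (h.eval w) ≤ M := by
    intro w hw
    rcases (v.nonneg w).eq_or_lt with hw0 | hw0
    · rw [← hw0, zero_mul]
      exact (one_div_pos.mp ((v.nonneg w).trans_lt hw)).le
    · have := hb w hw
      rw [habv] at this
      nlinarith
  intro z hz
  rw [habv, mul_comm (M ^ 2)]
  exact mul_le_mul_of_nonneg_left
    (v.abv_eval_le_sq_of_forall_abv_mul_abv_eval_le hna hv h hbh hz) (by positivity)

/-- Let `K` be an algebraically closed field with a nontrivial non-archimedean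
absolute value. Let `g ∈ K[z]` with `g(0) = 0` and `g'(0) = 0`, and let `M ≥ 1` be such that
`|g(z)| ≤ M·|z|` for every `z` with `|z| < 1/M`. Then for every `z` with `|z| < 1/M`,
`|g(z)| ≤ M²·|z|²`. -/
theorem stmt11 (K : Type*) [Field K] [IsAlgClosed K] (v : AbsoluteValue K ℝ)
    (hna : ∀ x y : K, v (x + y) ≤ max (v x) (v y))
    (hnt : ∃ x : K, v x ≠ 0 ∧ v x ≠ 1)
    (g : Polynomial K) (hg0 : g.eval 0 = 0)
    (hg'0 : (Polynomial.derivative g).eval 0 = 0)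
    (M : ℝ) (hM : 1 ≤ M)
    (hb : ∀ z : K, v z < 1 / M → v (g.eval z) ≤ M * v z) :
    ∀ z : K, v z < 1 / M → v (g.eval z) ≤ M ^ 2 * (v z) ^ 2 :=
  stmt11_general K v hna hnt g hg0 hg'0 M hb
end

section
/- For all integers d ≥ 1 and n ≥ 1, the integer n divides d_n := ∑_{m | n} μ(n/m)(d^m + 1), the sum ranging over positive divisors m of n, where μ is the Möbius function. -/
open ArithmeticFunction Finset
open scoped ArithmeticFunction.Moebius

/-!
For a prime power `p ^ k ∣∣ n`, write `n = p ^ k * m`. In `∑_{e ∣ n} μ(e) a(n / e)` only the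
divisors `e` and `p * e` with `e ∣ m` carry a nonzero Möbius weight, and they pair up into
`μ(e) (a(p ^ k * (m / e)) - a(p ^ (k - 1) * (m / e)))`. So `n` divides the sum as soon as `a`
satisfies the Gauss congruences `p ^ (k + 1) ∣ a(p ^ (k + 1) t) - a(p ^ k t)`, which hold for
`a m = d ^ m + 1` by Fermat's little theorem lifted to prime powers.
-/

theorem Nat.Coprime.sum_divisors_mul_eq_sum_sum {M : Type*} [AddCommMonoid M] {u v : ℕ}
    (huv : u.Coprime v) (f : ℕ → M) :
    ∑ e ∈ (u * v).divisors, f e = ∑ i ∈ u.divisors, ∑ j ∈ v.divisors, f (i * j) := by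
  rw [huv.divisors_mul, sum_map]
  exact (sum_attach _ fun x : ℕ × ℕ => f (x.1 * x.2)).trans (sum_product _ _ _)

theorem sum_divisors_moebius_div_mul_eq (a : ℕ → ℤ) (n : ℕ) :
    ∑ m ∈ n.divisors, (μ (n / m) : ℤ) * a m = ∑ e ∈ n.divisors, (μ e : ℤ) * a (n / e) :=
  (Nat.sum_divisorsAntidiagonal' fun x y => (μ x : ℤ) * a y).symm.trans
    (Nat.sum_divisorsAntidiagonal fun x y => (μ x : ℤ) * a y)

theorem sum_divisors_prime_pow_mul_moebius (a : ℕ → ℤ) {p m : ℕ} (hp : p.Prime) (hpm : ¬p ∣ m)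
    (k : ℕ) :
    ∑ e ∈ (p ^ (k + 1) * m).divisors, (μ e : ℤ) * a (p ^ (k + 1) * m / e) =
      ∑ j ∈ m.divisors, (μ j : ℤ) * (a (p ^ (k + 1) * (m / j)) - a (p ^ k * (m / j))) := by
  have hcop : ∀ i, (p ^ i).Coprime m := fun i => ((hp.coprime_iff_not_dvd).2 hpm).pow_left i
  rw [(hcop _).sum_divisors_mul_eq_sum_sum, Nat.sum_divisors_prime_pow hp, sum_comm]
  refine sum_congr rfl fun j hj => ?_
  have hjm : j ∣ m := Nat.dvd_of_mem_divisors hj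
  have hmul : ∀ i, μ (p ^ i * j) = μ (p ^ i) * μ j := fun i =>
    isMultiplicative_moebius.map_mul_of_coprime ((hcop i).coprime_dvd_right hjm)
  have hhigh : ∀ i ∈ range k, μ (p ^ (i + 1 + 1) * j) = 0 := fun i _ => by
    rw [hmul, moebius_apply_prime_pow hp (by omega), if_neg (by omega), zero_mul]
  rw [sum_range_succ', sum_range_succ', sum_eq_zero fun i hi => by rw [hhigh i hi, zero_mul]]
  rw [hmul, hmul, pow_zero, moebius_apply_one, zero_add, zero_add, pow_one, moebius_apply_prime hp]
  have hdiv₀ : p ^ (k + 1) * m / (1 * j) = p ^ (k + 1) * (m / j) := by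
    rw [one_mul, Nat.mul_div_assoc _ hjm]
  have hdiv₁ : p ^ (k + 1) * m / (p * j) = p ^ k * (m / j) := by
    rw [Nat.mul_div_mul_comm (dvd_pow_self p k.succ_ne_zero) hjm, pow_succ,
      Nat.mul_div_cancel _ hp.pos]
  rw [hdiv₀, hdiv₁]
  ring

theorem prime_pow_dvd_sum_divisors_moebius_mul {a : ℕ → ℤ}
    (ha : ∀ p k t : ℕ, p.Prime → (p : ℤ) ^ (k + 1) ∣ a (p ^ (k + 1) * t) - a (p ^ k * t))
    {p m : ℕ} (hp : p.Prime) (hpm : ¬p ∣ m) (k : ℕ) :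
    (p : ℤ) ^ k ∣ ∑ e ∈ (p ^ k * m).divisors, (μ e : ℤ) * a (p ^ k * m / e) := by
  cases k with
  | zero => simp
  | succ k =>
    rw [sum_divisors_prime_pow_mul_moebius a hp hpm]
    exact dvd_sum fun j _ => (ha p k (m / j) hp).mul_left _

theorem dvd_sum_divisors_moebius_mul {a : ℕ → ℤ}
    (ha : ∀ p k t : ℕ, p.Prime → (p : ℤ) ^ (k + 1) ∣ a (p ^ (k + 1) * t) - a (p ^ k * t)) (n : ℕ) :
    (n : ℤ) ∣ ∑ m ∈ n.divisors, (μ (n / m) : ℤ) * a m := by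
  rcases eq_or_ne n 0 with rfl | hn
  · simp
  rw [sum_divisors_moebius_div_mul_eq, Int.natCast_dvd, Nat.dvd_iff_prime_pow_dvd_dvd]
  intro p j hp hpj
  obtain ⟨k, m, hpm, rfl⟩ := Nat.exists_eq_pow_mul_and_not_dvd hn p hp.ne_one
  have hjk : p ^ j ∣ p ^ k :=
    (((hp.coprime_iff_not_dvd).2 hpm).pow_left j).dvd_of_dvd_mul_right hpj
  refine hjk.trans (Int.natCast_dvd.1 ?_)
  exact_mod_cast prime_pow_dvd_sum_divisors_moebius_mul ha hp hpm k

theorem Int.prime_pow_succ_dvd_pow_sub_pow (c : ℤ) {p : ℕ} (hp : p.Prime) (k t : ℕ) :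
    (p : ℤ) ^ (k + 1) ∣ c ^ (p ^ (k + 1) * t) - c ^ (p ^ k * t) := by
  have : Fact p.Prime := ⟨hp⟩
  have hfermat : (p : ℤ) ∣ (c ^ t) ^ p - c ^ t := by
    rw [← ZMod.intCast_zmod_eq_zero_iff_dvd]
    push_cast
    rw [ZMod.pow_card, sub_self]
  have h := dvd_sub_pow_of_dvd_sub hfermat k
  rwa [← pow_mul, ← pow_mul, ← pow_mul, ← pow_succ', mul_comm t, mul_comm t] at h

theorem stmt15_general (d n : ℕ) :
    (n : ℤ) ∣ ∑ m ∈ n.divisors, (μ (n / m) : ℤ) * ((d : ℤ) ^ m + 1) :=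
  dvd_sum_divisors_moebius_mul (fun p k t hp => by
    simpa only [add_sub_add_right_eq_sub] using Int.prime_pow_succ_dvd_pow_sub_pow d hp k t) n

/-- For all integers `d ≥ 1` and `n ≥ 1`, `n` divides
`d_n := ∑_{m | n} μ(n/m)(d^m + 1)`. -/
theorem stmt15 (d n : ℕ) (hd : 1 ≤ d) (hn : 1 ≤ n) :
    (n : ℤ) ∣ ∑ m ∈ n.divisors, (μ (n / m) : ℤ) * ((d : ℤ) ^ m + 1) :=
  stmt15_general d n
end
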